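/- (Self-duality of the T-PSD cone) A symmetric tensor A ∈ ℝ^{n×n×p} is T-positive semidefinite if and only if ⟨A, B⟩ ≥ 0 for every symmetric T-positive semidefinite tensor B ∈ ℝ^{n×n×p}. In other words, the cone of symmetric T-PSD tensors equals its dual cone within the space of symmetric tensors. -/

import Mathlib

open Matrix BigOperators

variable {p : ℕ}

/-- Block circulant matrix of a third-order tensor (tensor = family of frontal slices). -/
def bcirc {I J : Type*} (A : Fin p → Matrix I J ℝ) :
    Matrix (Fin p × I) (Fin p × J) ℝ :=
  Matrix.of fun ik jl => A (ik.1 - jl.1) ik.2 jl.2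

/-- T-product of third-order tensors: `(A*B)^(k) = Σ_j A^(k-j) B^(j)` (indices mod p),
which is exactly `fold(bcirc(A) · unfold(B))`. -/
def tProd {I J K : Type*} [Fintype J] (A : Fin p → Matrix I J ℝ)
    (B : Fin p → Matrix J K ℝ) : Fin p → Matrix I K ℝ :=
  fun k => ∑ j : Fin p, A (k - j) * B j

/-- Tensor transpose: transpose each frontal slice and reverse slices 2..p. -/
def ttrans {I J : Type*} (A : Fin p → Matrix I J ℝ) :
    Fin p → Matrix J I ℝ :=
  fun k => (A (-k))ᵀ

/-- Identity tensor: first frontal slice the identity matrix, other slices zero. -/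
def tid (I : Type*) [DecidableEq I] [NeZero p] : Fin p → Matrix I I ℝ :=
  fun k => if k = 0 then 1 else 0

/-- Entrywise (Frobenius) inner product of third-order tensors. -/
def tinner {I J : Type*} [Fintype I] [Fintype J]
    (X Y : Fin p → Matrix I J ℝ) : ℝ :=
  ∑ k, ∑ i, ∑ j, X k i j * Y k i j

/-- Symmetric T-positive semidefinite tensor. -/
def TPSD {I : Type*} [Fintype I] (A : Fin p → Matrix I I ℝ) : Prop :=
  ttrans A = A ∧ ∀ X : Fin p → Matrix I (Fin 1) ℝ, 0 ≤ tinner X (tProd A X)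

/-- Symmetric T-positive definite tensor. -/
def TPD {I : Type*} [Fintype I] (A : Fin p → Matrix I I ℝ) : Prop :=
  ttrans A = A ∧ ∀ X : Fin p → Matrix I (Fin 1) ℝ, X ≠ 0 → 0 < tinner X (tProd A X)

/-- k-fold T-product power of a tensor, with `tpow A 0` the identity tensor. -/
def tpow {I : Type*} [Fintype I] [DecidableEq I] [NeZero p]
    (A : Fin p → Matrix I I ℝ) : ℕ → Fin p → Matrix I I ℝ
  | 0 => tid I
  | k + 1 => tProd A (tpow A k)

/-! The block-circulant matrix `bcirc` turns the T-product into matrix multiplication and the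
tensor transpose into the matrix transpose, a symmetric tensor is T-PSD exactly when its `bcirc`
is positive semidefinite, and `tr (bcirc A * (bcirc B)ᵀ) = p ⟨A, B⟩`. So `⟨A, B⟩ ≥ 0` for T-PSD
`A`, `B` because the trace of a product of two PSD matrices is nonnegative. Conversely
`⟨X, A * X⟩ = ⟨A, X * Xᵀ⟩`, and `X * Xᵀ` is T-PSD, being a symmetric tensor whose `bcirc` is
`M * Mᵀ` for `M = bcirc X`. -/

theorem Matrix.PosSemidef.trace_mul_nonneg {m : Type*} [Fintype m] {M N : Matrix m m ℝ}
    (hM : M.PosSemidef) (hN : N.PosSemidef) : 0 ≤ (M * N).trace := by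
  classical
  obtain ⟨C, rfl⟩ : ∃ C : Matrix m m ℝ, N = Cᴴ * C := by
    open scoped MatrixOrder in exact CStarAlgebra.nonneg_iff_eq_star_mul_self.mp hN.nonneg
  rw [← Matrix.mul_assoc, trace_mul_comm, ← Matrix.mul_assoc]
  exact (hM.mul_mul_conjTranspose_same C).trace_nonneg

section
variable {I J K : Type*}

lemma ttrans_ttrans (A : Fin p → Matrix I J ℝ) : ttrans (ttrans A) = A := by
  funext k
  simp [ttrans]

/-- The paper's `unfold X` for a lateral slice `X ∈ ℝ^{I×1×p}`. -/
def tvec (X : Fin p → Matrix I (Fin 1) ℝ) : Fin p × I → ℝ := fun ki => X ki.1 ki.2 0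

lemma tvec_surjective : Function.Surjective (tvec : (Fin p → Matrix I (Fin 1) ℝ) → _) :=
  fun x => ⟨fun k => of fun i _ => x (k, i), rfl⟩

lemma tinner_tProd_self [Fintype I] (A : Fin p → Matrix I I ℝ) (X : Fin p → Matrix I (Fin 1) ℝ) :
    tinner X (tProd A X) = tvec X ⬝ᵥ bcirc A *ᵥ tvec X := by
  simp only [tinner, tProd, dotProduct, mulVec, bcirc, tvec, Matrix.sum_apply,
    Matrix.mul_apply, Fintype.sum_prod_type, Finset.mul_sum, of_apply, Fin.sum_univ_one]

lemma tinner_comm [Fintype I] [Fintype J] (A B : Fin p → Matrix I J ℝ) :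
    tinner A B = tinner B A := by
  simp only [tinner, mul_comm]

variable [NeZero p]

lemma ttrans_tProd [Fintype J] (A : Fin p → Matrix I J ℝ) (B : Fin p → Matrix J K ℝ) :
    ttrans (tProd A B) = tProd (ttrans B) (ttrans A) := by
  funext k
  simp only [ttrans, tProd, transpose_sum, transpose_mul]
  exact Fintype.sum_equiv (Equiv.addLeft k) _ _ fun j => by
    simp [sub_add_cancel_left, neg_add_eq_sub]

lemma bcirc_tProd [Fintype J] (A : Fin p → Matrix I J ℝ) (B : Fin p → Matrix J K ℝ) :
    bcirc (tProd A B) = bcirc A * bcirc B := by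
  ext ⟨k, i⟩ ⟨l, j⟩
  simp only [bcirc, of_apply, tProd, Matrix.sum_apply, mul_apply, Fintype.sum_prod_type]
  refine Fintype.sum_equiv (Equiv.addRight l) _ _ fun m => ?_
  simp only [Equiv.coe_addRight, add_sub_cancel_right, sub_add_eq_sub_sub, sub_right_comm]

lemma bcirc_ttrans (A : Fin p → Matrix I J ℝ) : bcirc (ttrans A) = (bcirc A)ᵀ := by
  ext ⟨k, j⟩ ⟨l, i⟩
  simp [bcirc, ttrans]

lemma isHermitian_bcirc {A : Fin p → Matrix I I ℝ} (hA : ttrans A = A) :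
    (bcirc A).IsHermitian := by
  rw [IsHermitian, conjTranspose_eq_transpose_of_trivial, ← bcirc_ttrans, hA]

lemma trace_bcirc_mul_transpose_bcirc [Fintype I] [Fintype J] (A B : Fin p → Matrix I J ℝ) :
    (bcirc A * (bcirc B)ᵀ).trace = p * tinner A B := by
  have shift (l : Fin p) : ∑ i, ∑ k, ∑ j, A (l - k) i j * B (l - k) i j = tinner A B := by
    rw [Finset.sum_comm]
    exact (Equiv.subLeft l).sum_comp fun m => ∑ i, ∑ j, A m i j * B m i j
  simp only [trace, diag, mul_apply, transpose_apply, bcirc, of_apply, Fintype.sum_prod_type,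
    shift, Finset.sum_const, Finset.card_univ, Fintype.card_fin, nsmul_eq_mul]

lemma tinner_tProd [Fintype I] [Fintype J] [Fintype K] (A : Fin p → Matrix I K ℝ)
    (X : Fin p → Matrix I J ℝ) (Y : Fin p → Matrix J K ℝ) :
    tinner A (tProd X Y) = tinner (tProd A (ttrans Y)) X := by
  refine mul_left_cancel₀ (Nat.cast_ne_zero.mpr (NeZero.ne p) : (p : ℝ) ≠ 0) ?_
  rw [← trace_bcirc_mul_transpose_bcirc, ← trace_bcirc_mul_transpose_bcirc, bcirc_tProd,
    bcirc_tProd, bcirc_ttrans, transpose_mul, Matrix.mul_assoc]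

lemma tinner_tProd_ttrans_self [Fintype I] [Fintype J] (A : Fin p → Matrix I I ℝ)
    (X : Fin p → Matrix I J ℝ) : tinner A (tProd X (ttrans X)) = tinner X (tProd A X) := by
  rw [tinner_tProd, ttrans_ttrans, tinner_comm]

lemma tpsd_iff_posSemidef_bcirc [Fintype I] {A : Fin p → Matrix I I ℝ} (hA : ttrans A = A) :
    TPSD A ↔ (bcirc A).PosSemidef := by
  rw [TPSD, posSemidef_iff_dotProduct_mulVec, tvec_surjective.forall]
  simp only [tinner_tProd_self, star_trivial, hA, isHermitian_bcirc hA, true_and]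

lemma TPSD.tinner_nonneg [Fintype I] {A B : Fin p → Matrix I I ℝ} (hA : TPSD A) (hB : TPSD B) :
    0 ≤ tinner A B := by
  have hAB := ((tpsd_iff_posSemidef_bcirc hA.1).mp hA).trace_mul_nonneg
    ((tpsd_iff_posSemidef_bcirc hB.1).mp hB)
  rw [← hB.1, bcirc_ttrans, trace_bcirc_mul_transpose_bcirc] at hAB
  exact (mul_nonneg_iff_of_pos_left (Nat.cast_pos.mpr (NeZero.pos p))).mp hAB

lemma tpsd_tProd_ttrans_self [Fintype I] [Fintype J] (X : Fin p → Matrix I J ℝ) :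
    TPSD (tProd X (ttrans X)) := by
  have hsymm : ttrans (tProd X (ttrans X)) = tProd X (ttrans X) := by
    rw [ttrans_tProd, ttrans_ttrans]
  rw [tpsd_iff_posSemidef_bcirc hsymm, bcirc_tProd, bcirc_ttrans,
    ← conjTranspose_eq_transpose_of_trivial]
  exact posSemidef_self_mul_conjTranspose _

end

/-- self-duality of the T-PSD cone. -/
theorem tpsd_self_dual {n p : ℕ} (A : Fin p → Matrix (Fin n) (Fin n) ℝ)
    (hA : ttrans A = A) :
    TPSD A ↔ ∀ B : Fin p → Matrix (Fin n) (Fin n) ℝ, TPSD B → 0 ≤ tinner A B := by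
  obtain rfl | _ := eq_zero_or_neZero p
  · simp [TPSD, tinner, hA]
  refine ⟨fun hA' B hB => hA'.tinner_nonneg hB, fun hdual => ⟨hA, fun X => ?_⟩⟩
  rw [← tinner_tProd_ttrans_self]
  exact hdual _ (tpsd_tProd_ttrans_self X)
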